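/- Assume conj(B) = B − 2πiH for a symmetric g×g integer matrix H. Let n ≥ 1 and V, W ∈ ℂ^g with conj(V) = −V and conj(W) = −W. For each j = 1,…,n let r_j ∈ ℂ^g and N_j, M_j ∈ ℤ^g satisfy conj(r_j) = −r_j − 2πiN_j − BM_j and 2N_j + HM_j = 0, and suppose ⟨HM_j,M_j⟩ + ⟨diag(H),M_j⟩ ≡ 0 (mod 4). Let E_j, F_j ∈ ℂ satisfy conj(E_j) = E_j − ⟨V,M_j⟩ and conj(F_j) = F_j + ⟨W,M_j⟩. Let q₂ⱼ ∈ ℂ∖{0} and α_j ∈ ℤ with q₂ⱼ = |q₂ⱼ|·exp( iπ(1+α_j) + (iπ/2)⟨HM_j,M_j⟩ − (1/2)⟨BM_j,M_j⟩ − ⟨r_j,M_j⟩ ). Let d = d_R + (iπ/2)(diag(H) − 2T) with d_R ∈ ℝ^g and T ∈ ℤ^g, let θ ∈ ℝ, and set A_j = |q₂ⱼ|^{1/2}·exp((1/2)⟨d_R,M_j⟩)·e^{iθ}. Define Z(x,t) = iVx + iWt, ψ_j(x,t) = A_j·Θ(Z−d+r_j)/Θ(Z−d)·exp(i(−E_jx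 + F_jt)), ψ*_j(x,t) = (q₂ⱼ/A_j)·Θ(Z−d−r_j)/Θ(Z−d)·exp(i(E_jx − F_jt)). Then for all real x, t with Θ(Z(x,t)−d) ≠ 0 and each j = 1,…,n, the n-NLS reality condition holds: ψ*_j(x,t) = s_j·conj(ψ_j(x,t)), where s_j = exp(iπ(1+α_j) + iπ⟨T,M_j⟩) ∈ {1,−1}. -/

import Mathlib

/-!
For symmetric integral `H` the number `⟨Hm,m⟩ + ⟨diag H, m⟩` is even, so conjugating the
series of `Θ` term by term gives `conj Θ(z) = Θ(conj z + πi diag H)` when `conj B = B - 2πiH`.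
The reality conditions on `V`, `W`, `d` say that `Z - d` is fixed by `z ↦ conj z + πi diag H`
up to a period `2πiℤ^g`, so `Θ(Z - d)` is real, and the condition on `r_j` turns
`conj Θ(Z - d + r_j)` into `Θ(Z - d - r_j - B M_j)`, i.e. `Θ(Z - d - r_j)` times its
quasi-periodicity factor. What remains is a comparison of phases, in which everything cancels
up to `exp(πi/2 (⟨HM_j,M_j⟩ + ⟨diag H, M_j⟩))`; this is where the congruence mod 4 enters.
-/

open Complex ComplexConjugate

noncomputable section

/-- Bilinear pairing ⟨u,v⟩ = Σ uᵢ vᵢ (no complex conjugation). -/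
def pairC {g : ℕ} (u v : Fin g → ℂ) : ℂ := ∑ i, u i * v i

/-- The Riemann theta function with period matrix `B`. -/
def theta {g : ℕ} (B : Matrix (Fin g) (Fin g) ℂ) (z : Fin g → ℂ) : ℂ :=
  ∑' m : Fin g → ℤ,
    Complex.exp ((1 / 2) * pairC (B.mulVec (fun i => (m i : ℂ))) (fun i => (m i : ℂ))
      + pairC (fun i => (m i : ℂ)) z)

open Matrix Real

lemma CharTwo.sum_offDiag_eq_zero {ι R : Type*} [DecidableEq ι] [Semiring R] [CharP R 2]
    (s : Finset ι) (a : ι → ι → R) (ha : ∀ i j, a i j = a j i) :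
    ∑ p ∈ s.offDiag, a p.1 p.2 = 0 :=
  Finset.sum_involution (fun p _ => p.swap)
    (fun p _ => by rw [Prod.fst_swap, Prod.snd_swap, ← ha, CharTwo.add_self_eq_zero])
    (fun p hp _ h => (Finset.mem_offDiag.mp hp).2.2 (congrArg Prod.snd h))
    (fun p hp => by
      obtain ⟨h₁, h₂, hne⟩ := Finset.mem_offDiag.mp hp
      exact Finset.mem_offDiag.mpr ⟨h₂, h₁, Ne.symm hne⟩)
    (fun p _ => p.swap_swap)

lemma CharTwo.sum_sum_eq_sum_diag {ι R : Type*} [Semiring R] [CharP R 2]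
    (s : Finset ι) (a : ι → ι → R) (ha : ∀ i j, a i j = a j i) :
    ∑ i ∈ s, ∑ j ∈ s, a i j = ∑ i ∈ s, a i i := by
  classical
  rw [← Finset.sum_product', ← Finset.diag_union_offDiag,
    Finset.sum_union (Finset.disjoint_diag_offDiag _), CharTwo.sum_offDiag_eq_zero s a ha,
    add_zero, Finset.sum_diag]

lemma Matrix.IsSymm.even_dotProduct_mulVec_add_diag {ι : Type*} [Fintype ι]
    {H : Matrix ι ι ℤ} (hH : H.IsSymm) (m : ι → ℤ) :
    Even (H *ᵥ m ⬝ᵥ m + H.diag ⬝ᵥ m) := by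
  rw [even_iff_two_dvd, ← Nat.cast_ofNat, ← ZMod.intCast_zmod_eq_zero_iff_dvd]
  have hsq : ∀ x : ZMod 2, x * x = x := by decide
  push_cast [dotProduct, Matrix.mulVec, Matrix.diag, Finset.sum_mul]
  rw [CharTwo.sum_sum_eq_sum_diag _ (fun i j => (H i j : ZMod 2) * m j * m i)
    (fun i j => by rw [hH.apply i j]; ring)]
  simp only [mul_assoc, hsq, CharTwo.add_self_eq_zero]

lemma Matrix.IsSymm.mulVec_dotProduct_comm {ι R : Type*} [Fintype ι] [CommSemiring R]
    {A : Matrix ι ι R} (hA : A.IsSymm) (u v : ι → R) :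
    A *ᵥ u ⬝ᵥ v = A *ᵥ v ⬝ᵥ u := by
  rw [dotProduct_comm, dotProduct_mulVec, ← mulVec_transpose, hA.eq]

lemma pairC_eq_dotProduct {g : ℕ} (u v : Fin g → ℂ) : pairC u v = u ⬝ᵥ v := rfl

def quasiPeriodFactor {g : ℕ} (B : Matrix (Fin g) (Fin g) ℂ) (M : Fin g → ℤ)
    (z : Fin g → ℂ) : ℂ :=
  Complex.exp (-(1 / 2) * pairC (B *ᵥ fun i => (M i : ℂ)) (fun i => (M i : ℂ))
    + pairC (fun i => (M i : ℂ)) z)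

section Theta

variable {g : ℕ} {B : Matrix (Fin g) (Fin g) ℂ} {H : Matrix (Fin g) (Fin g) ℤ}

lemma theta_add_int_period (z : Fin g → ℂ) (k : Fin g → ℤ) :
    theta B (z + (2 * π * I) • fun i => (k i : ℂ)) = theta B z := by
  refine tsum_congr fun m => Complex.exp_eq_exp_iff_exists_int.mpr ⟨m ⬝ᵥ k, ?_⟩
  simp only [pairC_eq_dotProduct, dotProduct_add, dotProduct_smul, smul_eq_mul]
  push_cast [dotProduct]
  ring

lemma theta_sub_mulVec (hB : B.IsSymm) (z : Fin g → ℂ) (M : Fin g → ℤ) :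
    theta B (z - B *ᵥ fun i => (M i : ℂ)) = quasiPeriodFactor B M z * theta B z := by
  rw [theta, ← (Equiv.addRight M).tsum_eq, theta, ← tsum_mul_left]
  refine tsum_congr fun m => ?_
  have hcast : (fun i => ((m + M) i : ℂ)) = (fun i => (m i : ℂ)) + fun i => (M i : ℂ) := by
    ext i; simp
  rw [quasiPeriodFactor, ← Complex.exp_add, Equiv.coe_addRight, hcast]
  congr 1
  simp only [pairC_eq_dotProduct, mulVec_add, add_dotProduct, dotProduct_add, dotProduct_sub]
  linear_combination
    (1 / 2) * hB.mulVec_dotProduct_comm (fun i => (m i : ℂ)) (fun i => (M i : ℂ))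
    - dotProduct_comm (fun i => (m i : ℂ)) (B *ᵥ fun i => (M i : ℂ))
    - dotProduct_comm (fun i => (M i : ℂ)) (B *ᵥ fun i => (M i : ℂ))

lemma conj_mulVec_intCast_dotProduct
    (hBH : ∀ i j, conj (B i j) = B i j - 2 * (π : ℂ) * I * (H i j : ℂ)) (m : Fin g → ℤ) :
    conj ((B *ᵥ fun i => (m i : ℂ)) ⬝ᵥ fun i => (m i : ℂ))
      = ((B *ᵥ fun i => (m i : ℂ)) ⬝ᵥ fun i => (m i : ℂ))
        - 2 * (π : ℂ) * I * ((H *ᵥ m ⬝ᵥ m : ℤ) : ℂ) := by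
  simp only [dotProduct, mulVec, map_sum, map_mul, map_intCast, hBH, sub_mul,
    Finset.sum_sub_distrib, Finset.sum_mul]
  push_cast [Finset.mul_sum]
  ring_nf

lemma conj_theta (hH : H.IsSymm)
    (hBH : ∀ i j, conj (B i j) = B i j - 2 * (π : ℂ) * I * (H i j : ℂ)) (z : Fin g → ℂ) :
    conj (theta B z) = theta B (star z + ((π : ℂ) * I) • fun i => (H i i : ℂ)) := by
  rw [theta, starRingEnd_apply, tsum_star]
  refine tsum_congr fun m => ?_
  obtain ⟨c, hc⟩ := hH.even_dotProduct_mulVec_add_diag m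
  rw [← starRingEnd_apply, ← Complex.exp_conj, Complex.exp_eq_exp_iff_exists_int]
  refine ⟨-c, ?_⟩
  have hcC : ((H *ᵥ m ⬝ᵥ m : ℤ) : ℂ) + ((H.diag ⬝ᵥ m : ℤ) : ℂ) = c + c := by
    exact_mod_cast hc
  have hz : conj ((fun i => (m i : ℂ)) ⬝ᵥ z) = (fun i => (m i : ℂ)) ⬝ᵥ star z := by
    simp [dotProduct, map_sum]
  have hdiag : ((fun i => (m i : ℂ)) ⬝ᵥ ((π : ℂ) * I) • fun i => (H i i : ℂ))
      = (π : ℂ) * I * ((H.diag ⬝ᵥ m : ℤ) : ℂ) := by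
    rw [dotProduct_smul, smul_eq_mul, dotProduct_comm]
    push_cast [dotProduct, Matrix.diag]
    rfl
  simp only [pairC_eq_dotProduct, map_add, map_mul, conj_mulVec_intCast_dotProduct hBH, hz,
    dotProduct_add, hdiag, map_div₀, map_one, map_ofNat]
  push_cast
  linear_combination (-(π : ℂ) * I) * hcC

lemma conj_theta_add_div (hB : B.IsSymm) (hH : H.IsSymm)
    (hBH : ∀ i j, conj (B i j) = B i j - 2 * (π : ℂ) * I * (H i j : ℂ))
    {w r : Fin g → ℂ} {k N M : Fin g → ℤ}
    (hw : star w + ((π : ℂ) * I) • (fun i => (H i i : ℂ))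
      = w + (2 * π * I) • fun i => (k i : ℂ))
    (hr : ∀ i, conj (r i)
      = -r i - 2 * (π : ℂ) * I * (N i : ℂ) - (B *ᵥ fun i => (M i : ℂ)) i) :
    conj (theta B (w + r) / theta B w) =
      quasiPeriodFactor B M (w - r) * (theta B (w - r) / theta B w) := by
  have hwr : star (w + r) + ((π : ℂ) * I) • (fun i => (H i i : ℂ))
      = (w - r) + (2 * π * I) • (fun i => ((k - N) i : ℂ)) - B *ᵥ fun i => (M i : ℂ) := by
    ext i
    have hwi := congrFun hw i
    have hri : star (r i) = _ := hr i
    simp only [Pi.add_apply, Pi.sub_apply, Pi.smul_apply, Pi.star_apply, smul_eq_mul,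
      star_add] at hwi ⊢
    push_cast
    linear_combination hwi + hri
  rw [map_div₀, conj_theta hH hBH, conj_theta hH hBH, hw, hwr, theta_add_int_period,
    add_sub_right_comm, theta_add_int_period, theta_sub_mulVec hB, mul_div_assoc]

end Theta

lemma ofReal_mul_exp_mul_I_mul_conj (ρ θ : ℝ) :
    (ρ : ℂ) * Complex.exp (I * θ) * conj ((ρ : ℂ) * Complex.exp (I * θ))
      = ((ρ ^ 2 : ℝ) : ℂ) := by
  rw [map_mul, Complex.conj_ofReal, ← Complex.exp_conj, map_mul, Complex.conj_I,
    Complex.conj_ofReal, mul_mul_mul_comm, ← Complex.exp_add]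
  push_cast
  ring_nf
  simp

lemma exp_int_mul_pi_mul_I_eq_one_or_neg_one (n : ℤ) :
    Complex.exp (n * (π * I)) = 1 ∨ Complex.exp (n * (π * I)) = -1 := by
  rw [Complex.exp_int_mul, Complex.exp_pi_mul_I]
  exact n.even_or_odd.imp Even.neg_one_zpow Odd.neg_one_zpow

lemma div_eq_mul_conj_of_eq_mul_mul_conj {q c a : ℂ} (h : q = c * (a * conj a)) :
    q / a = c * conj a := by
  rcases eq_or_ne a 0 with rfl | ha
  · simp
  · rw [div_eq_iff ha, h]
    ring

lemma star_sub_shift_eq_add_period {g : ℕ} {H : Matrix (Fin g) (Fin g) ℤ} {Z d : Fin g → ℂ}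
    {dR : Fin g → ℝ} {T : Fin g → ℤ} (hZ : star Z = Z)
    (hd : ∀ i, d i = (dR i : ℂ) + ((π : ℂ) * I / 2) * ((H i i : ℂ) - 2 * (T i : ℂ))) :
    star (Z - d) + ((π : ℂ) * I) • (fun i => (H i i : ℂ))
      = (Z - d) + (2 * π * I) • fun i => ((H i i - T i : ℤ) : ℂ) := by
  ext i
  have hZi := congrFun hZ i
  simp only [Pi.add_apply, Pi.sub_apply, Pi.smul_apply, Pi.star_apply, smul_eq_mul,
    star_sub] at hZi ⊢
  rw [hZi, hd i, ← starRingEnd_apply]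
  simp only [map_add, map_mul, map_sub, map_div₀, Complex.conj_ofReal, Complex.conj_I,
    map_intCast, map_ofNat]
  push_cast
  ring

lemma mul_exp_eq_sign_mul_quasiPeriodFactor {g : ℕ} {B : Matrix (Fin g) (Fin g) ℂ}
    {H : Matrix (Fin g) (Fin g) ℤ} {V W r d Z : Fin g → ℂ} {M T : Fin g → ℤ}
    {dR : Fin g → ℝ}
    {E F q A s : ℂ} {α : ℤ} {θ x t : ℝ}
    (hmod4 : (4 : ℤ) ∣ (∑ i, H.mulVec M i * M i + ∑ i, H i i * M i))
    (hE : conj E = E - ∑ i, V i * (M i : ℂ)) (hF : conj F = F + ∑ i, W i * (M i : ℂ))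
    (hq : q = ((‖q‖ : ℝ) : ℂ) *
      Complex.exp ((π : ℂ) * I * (1 + (α : ℂ))
        + ((π : ℂ) * I / 2) * ((∑ i, H.mulVec M i * M i : ℤ) : ℂ)
        - (1 / 2) * pairC (B *ᵥ fun i => (M i : ℂ)) (fun i => (M i : ℂ))
        - ∑ i, r i * (M i : ℂ)))
    (hd : ∀ i, d i = (dR i : ℂ) + ((π : ℂ) * I / 2) * ((H i i : ℂ) - 2 * (T i : ℂ)))
    (hA : A = ((Real.sqrt ‖q‖ * Real.exp ((1 / 2) * ∑ i, dR i * (M i : ℝ)) : ℝ) : ℂ) *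
      Complex.exp (I * (θ : ℂ)))
    (hZ : Z = fun i => I * V i * (x : ℂ) + I * W i * (t : ℂ))
    (hs : s = Complex.exp ((π : ℂ) * I * (1 + (α : ℂ))
      + (π : ℂ) * I * ∑ i, (T i : ℂ) * (M i : ℂ))) :
    q * Complex.exp (I * (E * x - F * t)) =
      s * quasiPeriodFactor B M (Z - d - r) * Complex.exp (I * (conj E * x - conj F * t))
        * (A * conj A) := by
  have hAA : A * conj A = ‖q‖ * Complex.exp (∑ i, (dR i : ℂ) * (M i : ℂ)) := by
    rw [hA, ofReal_mul_exp_mul_I_mul_conj, mul_pow, Real.sq_sqrt (norm_nonneg _),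
      ← Real.exp_nat_mul]
    push_cast
    ring_nf
  have hpair : pairC (fun i => (M i : ℂ)) (Z - d - r)
      = I * x * (∑ i, V i * (M i : ℂ)) + I * t * (∑ i, W i * (M i : ℂ))
        - (∑ i, (dR i : ℂ) * (M i : ℂ))
        - ((π : ℂ) * I / 2) * (∑ i, (H i i : ℂ) * (M i : ℂ))
        + (π : ℂ) * I * (∑ i, (T i : ℂ) * (M i : ℂ)) - (∑ i, r i * (M i : ℂ)) := by
    simp only [pairC, Pi.sub_apply, hZ, hd, Finset.mul_sum, ← Finset.sum_add_distrib,
      ← Finset.sum_sub_distrib]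
    exact Finset.sum_congr rfl fun i _ => by ring
  obtain ⟨c, hc⟩ := hmod4
  have hcC :
      ((∑ i, H.mulVec M i * M i : ℤ) : ℂ) + ∑ i, (H i i : ℂ) * (M i : ℂ) = 4 * c := by
    exact_mod_cast hc
  have hexp : Complex.exp (((π : ℂ) * I * (1 + (α : ℂ))
        + ((π : ℂ) * I / 2) * ((∑ i, H.mulVec M i * M i : ℤ) : ℂ)
        - (1 / 2) * pairC (B *ᵥ fun i => (M i : ℂ)) (fun i => (M i : ℂ))
        - ∑ i, r i * (M i : ℂ)) + I * (E * x - F * t)) =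
      Complex.exp (((π : ℂ) * I * (1 + (α : ℂ))
          + (π : ℂ) * I * ∑ i, (T i : ℂ) * (M i : ℂ))
        + (-(1 / 2) * pairC (B *ᵥ fun i => (M i : ℂ)) (fun i => (M i : ℂ))
          + pairC (fun i => (M i : ℂ)) (Z - d - r))
        + I * (conj E * x - conj F * t) + ∑ i, (dR i : ℂ) * (M i : ℂ)) := by
    refine Complex.exp_eq_exp_iff_exists_int.mpr ⟨c - ∑ i, T i * M i, ?_⟩
    rw [hpair, hE, hF]
    push_cast at hcC ⊢
    linear_combination ((π : ℂ) * I / 2) * hcC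
  rw [hAA, hs, quasiPeriodFactor]
  nth_rewrite 1 [hq]
  simp only [Complex.exp_add] at hexp ⊢
  linear_combination (‖q‖ : ℂ) * hexp

theorem stmt_15_general {g n : ℕ} (B : Matrix (Fin g) (Fin g) ℂ)
    (hBsymm : B.IsSymm)
    (H : Matrix (Fin g) (Fin g) ℤ) (hHsymm : H.IsSymm)
    (hBH : ∀ i j, conj (B i j) = B i j - 2 * (Real.pi : ℂ) * I * (H i j : ℂ))
    (V W : Fin g → ℂ)
    (hV : ∀ i, conj (V i) = -V i) (hW : ∀ i, conj (W i) = -W i)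
    (r : Fin n → Fin g → ℂ) (N M : Fin n → Fin g → ℤ)
    (hr : ∀ (j : Fin n) (i : Fin g), conj (r j i)
      = -r j i - 2 * (Real.pi : ℂ) * I * (N j i : ℂ)
        - B.mulVec (fun k => (M j k : ℂ)) i)
    (hmod4 : ∀ j : Fin n,
      (4 : ℤ) ∣ (∑ i, H.mulVec (M j) i * M j i + ∑ i, H i i * M j i))
    (E F : Fin n → ℂ)
    (hE : ∀ j, conj (E j) = E j - ∑ i, V i * (M j i : ℂ))
    (hF : ∀ j, conj (F j) = F j + ∑ i, W i * (M j i : ℂ))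
    (q₂ : Fin n → ℂ) (α : Fin n → ℤ)
    (hq₂ : ∀ j, q₂ j = ((‖q₂ j‖ : ℝ) : ℂ) *
      Complex.exp ((Real.pi : ℂ) * I * (1 + (α j : ℂ))
        + ((Real.pi : ℂ) * I / 2) * ((∑ i, H.mulVec (M j) i * M j i : ℤ) : ℂ)
        - (1 / 2) * pairC (B.mulVec (fun i => (M j i : ℂ))) (fun i => (M j i : ℂ))
        - ∑ i, r j i * (M j i : ℂ)))
    (dR : Fin g → ℝ) (T : Fin g → ℤ) (d : Fin g → ℂ)
    (hd : ∀ i, d i = (dR i : ℂ)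
      + ((Real.pi : ℂ) * I / 2) * ((H i i : ℂ) - 2 * (T i : ℂ)))
    (θ : ℝ) (A : Fin n → ℂ)
    (hA : ∀ j, A j = ((Real.sqrt (‖q₂ j‖) *
        Real.exp ((1 / 2) * ∑ i, dR i * (M j i : ℝ)) : ℝ) : ℂ) *
      Complex.exp (I * (θ : ℂ)))
    (Z : ℝ → ℝ → Fin g → ℂ)
    (hZ : ∀ x t : ℝ, Z x t = fun i => I * V i * (x : ℂ) + I * W i * (t : ℂ))
    (ψ ψs : Fin n → ℝ → ℝ → ℂ)
    (hψ : ∀ (j : Fin n) (x t : ℝ), ψ j x t =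
      A j * theta B (Z x t - d + r j) / theta B (Z x t - d) *
        Complex.exp (I * (-(E j * (x : ℂ)) + F j * (t : ℂ))))
    (hψs : ∀ (j : Fin n) (x t : ℝ), ψs j x t =
      (q₂ j / A j) * theta B (Z x t - d - r j) / theta B (Z x t - d) *
        Complex.exp (I * (E j * (x : ℂ) - F j * (t : ℂ))))
    (s : Fin n → ℂ)
    (hs : ∀ j, s j = Complex.exp ((Real.pi : ℂ) * I * (1 + (α j : ℂ))
      + (Real.pi : ℂ) * I * ∑ i, (T i : ℂ) * (M j i : ℂ))) :
    ∀ j : Fin n, (s j = 1 ∨ s j = -1) ∧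
      ∀ x t : ℝ, theta B (Z x t - d) ≠ 0 →
        ψs j x t = s j * conj (ψ j x t) := by
  intro j
  refine ⟨?_, fun x t _ => ?_⟩
  · rw [hs j, show (π : ℂ) * I * (1 + (α j : ℂ))
          + (π : ℂ) * I * ∑ i, (T i : ℂ) * (M j i : ℂ)
        = ((1 + α j + ∑ i, T i * M j i : ℤ) : ℂ) * (π * I) by push_cast; ring]
    exact exp_int_mul_pi_mul_I_eq_one_or_neg_one _
  have hZ_star : star (Z x t) = Z x t := by
    ext i
    simp only [hZ, Pi.star_apply, ← starRingEnd_apply, map_add, map_mul, Complex.conj_I,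
      Complex.conj_ofReal, hV, hW]
    ring
  have hθ :=
    conj_theta_add_div hBsymm hHsymm hBH (star_sub_shift_eq_add_period hZ_star hd) (hr j)
  have hq₂_div := div_eq_mul_conj_of_eq_mul_mul_conj <|
    mul_exp_eq_sign_mul_quasiPeriodFactor (hmod4 j) (hE j) (hF j) (hq₂ j) hd (hA j) (hZ x t)
      (hs j)
  have hexp : conj (Complex.exp (I * (-(E j * (x : ℂ)) + F j * (t : ℂ))))
      = Complex.exp (I * (conj (E j) * x - conj (F j) * t)) := by
    rw [← Complex.exp_conj]
    simp only [map_mul, map_add, map_neg, Complex.conj_I, Complex.conj_ofReal]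
    ring_nf
  calc ψs j x t
      = q₂ j * Complex.exp (I * (E j * x - F j * t)) / A j
          * (theta B (Z x t - d - r j) / theta B (Z x t - d)) := by rw [hψs]; ring
    _ = s j * conj (ψ j x t) := by
      rw [hq₂_div, hψ, mul_div_assoc, map_mul, map_mul, hθ, hexp]
      ring

/-- reality conditions `ψ*_j = s_j conj(ψ_j)` (with `s_j = ±1`)
for the theta-functional solutions of the multi-component NLS equation. -/
theorem stmt_15 {g n : ℕ} (hg : 1 ≤ g) (hn : 1 ≤ n) (B : Matrix (Fin g) (Fin g) ℂ)
    (hBsymm : B.IsSymm)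
    (hBneg : ∀ x : Fin g → ℝ, x ≠ 0 → ∑ i, ∑ j, (B i j).re * x i * x j < 0)
    (H : Matrix (Fin g) (Fin g) ℤ) (hHsymm : H.IsSymm)
    (hBH : ∀ i j, conj (B i j) = B i j - 2 * (Real.pi : ℂ) * I * (H i j : ℂ))
    (V W : Fin g → ℂ)
    (hV : ∀ i, conj (V i) = -V i) (hW : ∀ i, conj (W i) = -W i)
    (r : Fin n → Fin g → ℂ) (N M : Fin n → Fin g → ℤ)
    (hr : ∀ (j : Fin n) (i : Fin g), conj (r j i)
      = -r j i - 2 * (Real.pi : ℂ) * I * (N j i : ℂ)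
        - B.mulVec (fun k => (M j k : ℂ)) i)
    (hNM : ∀ (j : Fin n) (i : Fin g), 2 * N j i + H.mulVec (M j) i = 0)
    (hmod4 : ∀ j : Fin n,
      (4 : ℤ) ∣ (∑ i, H.mulVec (M j) i * M j i + ∑ i, H i i * M j i))
    (E F : Fin n → ℂ)
    (hE : ∀ j, conj (E j) = E j - ∑ i, V i * (M j i : ℂ))
    (hF : ∀ j, conj (F j) = F j + ∑ i, W i * (M j i : ℂ))
    (q₂ : Fin n → ℂ) (hq₂ne : ∀ j, q₂ j ≠ 0) (α : Fin n → ℤ)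
    (hq₂ : ∀ j, q₂ j = ((‖q₂ j‖ : ℝ) : ℂ) *
      Complex.exp ((Real.pi : ℂ) * I * (1 + (α j : ℂ))
        + ((Real.pi : ℂ) * I / 2) * ((∑ i, H.mulVec (M j) i * M j i : ℤ) : ℂ)
        - (1 / 2) * pairC (B.mulVec (fun i => (M j i : ℂ))) (fun i => (M j i : ℂ))
        - ∑ i, r j i * (M j i : ℂ)))
    (dR : Fin g → ℝ) (T : Fin g → ℤ) (d : Fin g → ℂ)
    (hd : ∀ i, d i = (dR i : ℂ)
      + ((Real.pi : ℂ) * I / 2) * ((H i i : ℂ) - 2 * (T i : ℂ)))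
    (θ : ℝ) (A : Fin n → ℂ)
    (hA : ∀ j, A j = ((Real.sqrt (‖q₂ j‖) *
        Real.exp ((1 / 2) * ∑ i, dR i * (M j i : ℝ)) : ℝ) : ℂ) *
      Complex.exp (I * (θ : ℂ)))
    (Z : ℝ → ℝ → Fin g → ℂ)
    (hZ : ∀ x t : ℝ, Z x t = fun i => I * V i * (x : ℂ) + I * W i * (t : ℂ))
    (ψ ψs : Fin n → ℝ → ℝ → ℂ)
    (hψ : ∀ (j : Fin n) (x t : ℝ), ψ j x t =
      A j * theta B (Z x t - d + r j) / theta B (Z x t - d) *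
        Complex.exp (I * (-(E j * (x : ℂ)) + F j * (t : ℂ))))
    (hψs : ∀ (j : Fin n) (x t : ℝ), ψs j x t =
      (q₂ j / A j) * theta B (Z x t - d - r j) / theta B (Z x t - d) *
        Complex.exp (I * (E j * (x : ℂ) - F j * (t : ℂ))))
    (s : Fin n → ℂ)
    (hs : ∀ j, s j = Complex.exp ((Real.pi : ℂ) * I * (1 + (α j : ℂ))
      + (Real.pi : ℂ) * I * ∑ i, (T i : ℂ) * (M j i : ℂ))) :
    ∀ j : Fin n, (s j = 1 ∨ s j = -1) ∧
      ∀ x t : ℝ, theta B (Z x t - d) ≠ 0 →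
        ψs j x t = s j * conj (ψ j x t) :=
  stmt_15_general B hBsymm H hHsymm hBH V W hV hW r N M hr hmod4 E F hE hF q₂ α hq₂ dR T d hd θ A hA
    Z hZ ψ ψs hψ hψs s hs
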